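/- Let A ∈ C^{n×n×p} be an invertible tensor and α a nonzero complex number. Then there exists a tensor B ∈ C^{n×n×p} with B^α = A; in particular for each positive integer m the equation X^m = A (m-fold T-product) has a solution. -/

import Mathlib

open Matrix Kronecker Complex Polynomial

noncomputable section

/-- Block circulant matrix of a third-order tensor given by its frontal slices. -/
def bcirc {m n p : ℕ} (A : Fin p → Matrix (Fin m) (Fin n) ℂ) :
    Matrix (Fin p × Fin m) (Fin p × Fin n) ℂ :=
  Matrix.of fun jr kc => A (jr.1 - kc.1) jr.2 kc.2

/-- The tensor T-product. -/
def tmul {m n s p : ℕ} (A : Fin p → Matrix (Fin m) (Fin n) ℂ)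
    (B : Fin p → Matrix (Fin n) (Fin s) ℂ) : Fin p → Matrix (Fin m) (Fin s) ℂ :=
  fun i => ∑ j : Fin p, A (i - j) * B j

/-- The identity tensor. -/
def tId {n p : ℕ} [NeZero p] : Fin p → Matrix (Fin n) (Fin n) ℂ :=
  fun i => if i = 0 then 1 else 0

/-- T-product powers of a tensor. -/
def tpow {n p : ℕ} [NeZero p] (A : Fin p → Matrix (Fin n) (Fin n) ℂ) : ℕ → Fin p → Matrix (Fin n) (Fin n) ℂ
  | 0 => tId
  | k + 1 => tmul (tpow A k) A

/-- Conjugate transpose of a tensor. -/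
def tconjT {m n p : ℕ} [NeZero p] (A : Fin p → Matrix (Fin m) (Fin n) ℂ) :
    Fin p → Matrix (Fin n) (Fin m) ℂ :=
  fun i => (A (-i))ᴴ

/-- Invertibility with respect to the T-product. -/
def TInvertible {n p : ℕ} [NeZero p] (A : Fin p → Matrix (Fin n) (Fin n) ℂ) : Prop :=
  ∃ B, tmul A B = tId ∧ tmul B A = tId

/-- `fold` of an `np × n` matrix back into a tensor (first block column). -/
def tfold {n p : ℕ} [NeZero p] (M : Matrix (Fin p × Fin n) (Fin p × Fin n) ℂ) :
    Fin p → Matrix (Fin n) (Fin n) ℂ :=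
  fun i => Matrix.of fun r c => M (i, r) ((0 : Fin p), c)

/-- The primitive root ω = e^{-2πi/p}. -/
def tomega (p : ℕ) : ℂ := Complex.exp (-2 * Real.pi * Complex.I / p)

/-- The (unitary) discrete Fourier matrix. -/
def fourierMat (p : ℕ) : Matrix (Fin p) (Fin p) ℂ :=
  Matrix.of fun j k => tomega p ^ ((j : ℕ) * (k : ℕ)) / Real.sqrt p

/-- Block diagonal matrix with `p` diagonal blocks of size `n × n`. -/
def bdiag {n p : ℕ} (B : Fin p → Matrix (Fin n) (Fin n) ℂ) :
    Matrix (Fin p × Fin n) (Fin p × Fin n) ℂ :=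
  Matrix.of fun jr kc => if jr.1 = kc.1 then B jr.1 jr.2 kc.2 else 0


/-- The tensor exponential T-function: `exp(A) = fold (exp(bcirc A) · Ê₁)`. -/
def texp {n p : ℕ} [NeZero p] (A : Fin p → Matrix (Fin n) (Fin n) ℂ) :
    Fin p → Matrix (Fin n) (Fin n) ℂ :=
  tfold (NormedSpace.exp (bcirc A))

/-! `bcirc` turns the T-product into the matrix product and `texp` into the matrix exponential,
so it suffices to find a logarithm of the invertible matrix `bcirc A` that is again block
circulant: then `texp (α⁻¹ • tfold C)` is an `α`-th root. Such a logarithm lies in the closed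
commutative subalgebra generated by `bcirc A`, because in a commutative Banach algebra whose
units form a connected set, `exp` maps onto the units. -/

open Topology Pointwise

section UnitsConnected

variable {K A : Type*} [Field K] [Ring A] [Algebra K A]

theorem Subalgebra.isUnit_of_isUnit_val (S : Subalgebra K A) [FiniteDimensional K S] {x : S}
    (hx : IsUnit (x : A)) : IsUnit x := by
  have := IsArtinianRing.of_finite K S
  rw [IsArtinianRing.isUnit_iff_mem_nonZeroDivisors, mem_nonZeroDivisors_iff]
  exact ⟨fun y hy => Subtype.ext (hx.mul_right_eq_zero.mp (congrArg Subtype.val hy)),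
    fun y hy => Subtype.ext (hx.mul_left_eq_zero.mp (congrArg Subtype.val hy))⟩

variable {N : Type*} [Fintype N] [DecidableEq N]

theorem Matrix.eval_charpolyRev_eq_det {R : Type*} [CommRing R] (M : Matrix N N R) (t : R) :
    (M.charpolyRev).eval t = (1 - t • M).det := by
  rw [charpolyRev, ← coe_evalRingHom, RingHom.map_det, RingHom.map_sub, map_one]
  congr 2
  ext i j
  simp only [RingHom.mapMatrix_apply, map_apply, Matrix.smul_apply, coe_evalRingHom]
  rw [smul_eq_mul, eval_mul, eval_X, eval_C, smul_eq_mul]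

/-- Along the line `t ↦ 1 - t • (1 - y)` the matrix fails to be invertible only at the finitely
many roots of `charpolyRev (1 - y)`, and the complement of a finite subset of `ℂ` is
path-connected. -/
theorem Subalgebra.isPathConnected_setOf_isUnit (S : Subalgebra ℂ (Matrix N N ℂ)) :
    IsPathConnected {x : S | IsUnit x} := by
  refine ⟨1, isUnit_one, fun {y} hy => ?_⟩
  let γ : ℂ → S := fun t => 1 - t • (1 - y)
  let q := ((1 - y : S) : Matrix N N ℂ).charpolyRev
  have hdet : ∀ t, q.eval t = (γ t : Matrix N N ℂ).det := fun t => by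
    simp [q, γ, Matrix.eval_charpolyRev_eq_det]
  have hq0 : q.eval 0 = 1 := Matrix.eval_charpolyRev
  have hq : q ≠ 0 := fun h => by simp [h] at hq0
  have hroots : {t | q.IsRoot t}.Countable := (Polynomial.finite_setOfPred_isRoot hq).countable
  have hunit : ∀ t ∈ {t | q.IsRoot t}ᶜ, IsUnit (γ t) := fun t ht =>
    S.isUnit_of_isUnit_val <| (Matrix.isUnit_iff_isUnit_det _).2 <|
      isUnit_iff_ne_zero.2 (hdet t ▸ ht)
  have h0 : (0 : ℂ) ∈ {t | q.IsRoot t}ᶜ := by simp [IsRoot, hdet, γ]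
  have h1 : (1 : ℂ) ∈ {t | q.IsRoot t}ᶜ := by
    simpa [IsRoot, hdet, γ] using ((Matrix.isUnit_iff_isUnit_det _).1 (hy.map S.val)).ne_zero
  have hγ : Continuous γ := continuous_induced_rng.2 <| by
    simp only [Function.comp_def, γ, Subalgebra.coe_sub, Subalgebra.coe_smul, Subalgebra.coe_one]
    fun_prop
  have hjoin := ((hroots.isPathConnected_compl_of_one_lt_rank
    (by rw [Complex.rank_real_complex]; norm_num)).joinedIn 0 h0 1 h1).map hγ
  simp only [γ, zero_smul, sub_zero, one_smul, sub_sub_cancel] at hjoin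
  exact hjoin.mono (Set.image_subset_iff.2 hunit)

end UnitsConnected

section CommBanachAlgebra

variable {R : Type*} [NormedCommRing R] [NormedAlgebra ℂ R] [CompleteSpace R]

theorem range_exp_mem_nhds_one : Set.range (NormedSpace.exp : R → R) ∈ 𝓝 1 := by
  have hexp : HasStrictFDerivAt (NormedSpace.exp : R → R)
      ((ContinuousLinearEquiv.refl ℂ R : R ≃L[ℂ] R) : R →L[ℂ] R) 0 :=
    hasStrictFDerivAt_exp_zero (𝕂 := ℂ)
  rw [← NormedSpace.exp_zero, ← hexp.map_nhds_eq_of_equiv]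
  exact Filter.range_mem_map

theorem units_smul_range_exp_mem_nhds (u : Rˣ) :
    u • Set.range (NormedSpace.exp : R → R) ∈ 𝓝 (u : R) := by
  simpa [Units.smul_def] using smul_mem_nhds_smul u (range_exp_mem_nhds_one (R := R))

theorem isOpen_range_exp : IsOpen (Set.range (NormedSpace.exp : R → R)) := by
  refine isOpen_iff_mem_nhds.2 ?_
  rintro _ ⟨c, rfl⟩
  let +nondep : NormedAlgebra ℚ R := .restrictScalars ℚ ℂ R
  obtain ⟨u, hu⟩ := NormedSpace.isUnit_exp c
  refine Filter.mem_of_superset (hu ▸ units_smul_range_exp_mem_nhds u) ?_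
  rintro _ ⟨_, ⟨d, rfl⟩, rfl⟩
  exact ⟨c + d, by simp only [NormedSpace.exp_add, hu, smul_eq_mul]⟩

theorem isOpen_setOf_isUnit_diff_range_exp :
    IsOpen ({x : R | IsUnit x} \ Set.range NormedSpace.exp) := by
  refine isOpen_iff_mem_nhds.2 ?_
  rintro _ ⟨⟨u, rfl⟩, hu⟩
  let +nondep : NormedAlgebra ℚ R := .restrictScalars ℚ ℂ R
  refine Filter.mem_of_superset (units_smul_range_exp_mem_nhds u) ?_
  rintro _ ⟨_, ⟨d, rfl⟩, rfl⟩
  refine ⟨u.isUnit.mul (NormedSpace.isUnit_exp d), ?_⟩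
  rintro ⟨e, he⟩
  refine hu ⟨e - d, ?_⟩
  simp only [smul_eq_mul] at he
  rw [sub_eq_add_neg, NormedSpace.exp_add, he, mul_assoc,
    ← NormedSpace.exp_add, add_neg_cancel, NormedSpace.exp_zero, mul_one]

/-- Since `R` is commutative, the range of `exp` is a subgroup of the units; it is open, and so is
its complement in the units, so it exhausts them when they form a connected set. -/
theorem mem_range_exp_of_isUnit (hR : IsPreconnected {x : R | IsUnit x}) {x : R}
    (hx : IsUnit x) : x ∈ Set.range NormedSpace.exp :=
  hR.subset_left_of_subset_union isOpen_range_exp isOpen_setOf_isUnit_diff_range_exp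
    Set.disjoint_sdiff_right (fun _ hy => or_iff_not_imp_left.2 fun h => ⟨hy, h⟩)
    ⟨1, isUnit_one, 0, NormedSpace.exp_zero⟩ hx

end CommBanachAlgebra

theorem Matrix.exists_mem_elemental_exp_eq {N : Type*} [Fintype N] [DecidableEq N]
    {M : Matrix N N ℂ} (hM : IsUnit M) :
    ∃ C ∈ Algebra.elemental ℂ M, NormedSpace.exp C = M := by
  let : NormedRing (Matrix N N ℂ) := Matrix.linftyOpNormedRing
  let : NormedAlgebra ℂ (Matrix N N ℂ) := Matrix.linftyOpNormedAlgebra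
  let S := Algebra.elemental ℂ M
  let : NormedCommRing S := { SubringClass.toNormedRing S with mul_comm := mul_comm }
  obtain ⟨C, hC⟩ := mem_range_exp_of_isUnit
    S.isPathConnected_setOf_isUnit.isConnected.isPreconnected
    (S.isUnit_of_isUnit_val (x := ⟨M, Algebra.elemental.self_mem ℂ M⟩) hM)
  let +nondep : NormedAlgebra ℚ S := .restrictScalars ℚ ℂ S
  let +nondep : NormedAlgebra ℚ (Matrix N N ℂ) := .restrictScalars ℚ ℂ (Matrix N N ℂ)
  refine ⟨C, C.2, ?_⟩
  have := NormedSpace.map_exp S.val continuous_subtype_val C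
  rw [hC] at this
  exact this.symm

section TProduct

variable {n p : ℕ}

theorem tfold_bcirc [NeZero p] (A : Fin p → Matrix (Fin n) (Fin n) ℂ) : tfold (bcirc A) = A := by
  funext i
  ext r c
  simp [tfold, bcirc]

theorem bcirc_injective [NeZero p] :
    Function.Injective (bcirc : (Fin p → Matrix (Fin n) (Fin n) ℂ) → _) :=
  Function.LeftInverse.injective tfold_bcirc

theorem bcirc_add {m : ℕ} (A B : Fin p → Matrix (Fin m) (Fin n) ℂ) :
    bcirc (A + B) = bcirc A + bcirc B :=
  rfl

theorem bcirc_smul {m : ℕ} (c : ℂ) (A : Fin p → Matrix (Fin m) (Fin n) ℂ) :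
    bcirc (c • A) = c • bcirc A :=
  rfl

variable [NeZero p]

theorem bcirc_tmul {m s : ℕ} (A : Fin p → Matrix (Fin m) (Fin n) ℂ)
    (B : Fin p → Matrix (Fin n) (Fin s) ℂ) : bcirc (tmul A B) = bcirc A * bcirc B := by
  ext ⟨i, r⟩ ⟨j, c⟩
  simp only [bcirc, tmul, Matrix.of_apply, Matrix.sum_apply, Matrix.mul_apply,
    Fintype.sum_prod_type]
  refine Fintype.sum_equiv (Equiv.addRight j) _ _ fun k => Finset.sum_congr rfl fun s _ => ?_
  simp [sub_sub, add_comm]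

theorem bcirc_tId : bcirc (tId : Fin p → Matrix (Fin n) (Fin n) ℂ) = 1 := by
  ext ⟨i, r⟩ ⟨j, c⟩
  rcases eq_or_ne i j with rfl | h
  · simp [bcirc, tId, Matrix.one_apply]
  · simp [bcirc, tId, sub_eq_zero, h]

theorem bcirc_tpow (X : Fin p → Matrix (Fin n) (Fin n) ℂ) (m : ℕ) :
    bcirc (tpow X m) = bcirc X ^ m := by
  induction m with
  | zero => rw [tpow, bcirc_tId, pow_zero]
  | succ k ih => rw [tpow, bcirc_tmul, ih, pow_succ]

theorem TInvertible.isUnit_bcirc {A : Fin p → Matrix (Fin n) (Fin n) ℂ} (hA : TInvertible A) :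
    IsUnit (bcirc A) := by
  obtain ⟨B, hAB, hBA⟩ := hA
  exact ⟨⟨bcirc A, bcirc B, by rw [← bcirc_tmul, hAB, bcirc_tId],
    by rw [← bcirc_tmul, hBA, bcirc_tId]⟩, rfl⟩

variable (n p) in
def bcircSubalgebra : Subalgebra ℂ (Matrix (Fin p × Fin n) (Fin p × Fin n) ℂ) where
  carrier := Set.range bcirc
  mul_mem' := by
    rintro _ _ ⟨A, rfl⟩ ⟨B, rfl⟩
    exact ⟨tmul A B, bcirc_tmul A B⟩
  add_mem' := by
    rintro _ _ ⟨A, rfl⟩ ⟨B, rfl⟩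
    exact ⟨A + B, bcirc_add A B⟩
  algebraMap_mem' c :=
    ⟨c • tId, by rw [bcirc_smul, bcirc_tId, Algebra.algebraMap_eq_smul_one]⟩

theorem isClosed_bcircSubalgebra :
    IsClosed (bcircSubalgebra n p : Set (Matrix (Fin p × Fin n) (Fin p × Fin n) ℂ)) :=
  (Subalgebra.toSubmodule (bcircSubalgebra n p)).closed_of_finiteDimensional

theorem bcirc_texp (L : Fin p → Matrix (Fin n) (Fin n) ℂ) :
    bcirc (texp L) = NormedSpace.exp (bcirc L) := by
  obtain ⟨L', hL'⟩ : NormedSpace.exp (bcirc L) ∈ bcircSubalgebra n p :=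
    NormedSpace.exp_mem isClosed_bcircSubalgebra ⟨L, rfl⟩
  rw [texp, ← hL', tfold_bcirc]

theorem tpow_texp (L : Fin p → Matrix (Fin n) (Fin n) ℂ) (m : ℕ) :
    tpow (texp L) m = texp ((m : ℂ) • L) := by
  apply bcirc_injective
  rw [bcirc_tpow, bcirc_texp, bcirc_texp, ← Matrix.exp_nsmul, bcirc_smul, Nat.cast_smul_eq_nsmul]

end TProduct

/-- every invertible tensor has an `α`-th root `B^α = exp(α · log B)`
for every nonzero `α`; in particular `X^m = A` is solvable for each positive
integer `m`. -/
theorem tensor_alpha_root {n p : ℕ} [NeZero p]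
    (A : Fin p → Matrix (Fin n) (Fin n) ℂ) (hA : TInvertible A)
    (α : ℂ) (hα : α ≠ 0) :
    (∃ B L : Fin p → Matrix (Fin n) (Fin n) ℂ, texp L = B ∧ texp (α • L) = A) ∧
      ∀ m : ℕ, 0 < m → ∃ X : Fin p → Matrix (Fin n) (Fin n) ℂ, tpow X m = A := by
  obtain ⟨C, hCA, hC⟩ := Matrix.exists_mem_elemental_exp_eq hA.isUnit_bcirc
  obtain ⟨L, rfl⟩ : C ∈ bcircSubalgebra n p :=
    Algebra.elemental.le_of_mem isClosed_bcircSubalgebra ⟨A, rfl⟩ hCA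
  have hL : texp L = A := bcirc_injective (by rw [bcirc_texp, hC])
  refine ⟨⟨texp (α⁻¹ • L), α⁻¹ • L, rfl, by rw [smul_inv_smul₀ hα, hL]⟩, fun m hm => ?_⟩
  refine ⟨texp ((m : ℂ)⁻¹ • L), ?_⟩
  rw [tpow_texp, smul_inv_smul₀ (Nat.cast_ne_zero.2 hm.ne'), hL]

end
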